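/- arXiv:2511.01626 — 4 statements merged into one kernel-verified Lean document; each statement's English description precedes it below -/
import Mathlib

section
/- If the weights are distinct nonnegative integers a₁,…,aₙ and n < 4·α^(−p), then a₁,…,aₙ are not p-dependent with respect to α. -/
noncomputable def pDependent (α p : ℝ) {n : ℕ} (a : Fin n → ℕ) : Prop :=
  ∃ x : Fin n → ℤ, x ≠ 0 ∧ (∑ i, (a i : ℤ) * x i) = 0 ∧ (∑ i, x i) = 0 ∧
    (∑ i, (|x i| : ℝ) ^ p) ^ (1/p) ≤ α * (n : ℝ) ^ (1/p)

lemma four_le_abs_sum {n : ℕ} (a : Fin n → ℕ) (ha : Function.Injective a)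
    (x : Fin n → ℤ) (hx : x ≠ 0) (h1 : (∑ i, (a i : ℤ) * x i) = 0)
    (h2 : (∑ i, x i) = 0) : 4 ≤ ∑ i, |x i| := by
  have heven : Even (∑ i, |x i|) := by
    have hsub : ∑ i, (|x i| - x i) = ∑ i, |x i| := by
      rw [Finset.sum_sub_distrib, h2, sub_zero]
    rw [← hsub]
    apply Finset.even_sum
    intro i _
    rcases le_or_gt 0 (x i) with h | h
    · simp [abs_of_nonneg h]
    · rw [abs_of_neg h]; exact ⟨-x i, by ring⟩
  obtain ⟨k, hk⟩ := Function.ne_iff.mp hx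
  have hpos : 0 < ∑ i, |x i| :=
    lt_of_lt_of_le (abs_pos.mpr hk)
      (Finset.single_le_sum (fun i _ => abs_nonneg (x i)) (Finset.mem_univ k))
  have hne2 : ∑ i, |x i| ≠ 2 := by
    intro hS
    obtain ⟨i, hi⟩ : ∃ i, 0 < x i := by
      by_contra h; push_neg at h
      exact hk ((Finset.sum_eq_zero_iff_of_nonpos (fun i _ => h i)).mp h2 k
        (Finset.mem_univ k))
    obtain ⟨j, hj⟩ : ∃ j, x j < 0 := by
      by_contra h; push_neg at h
      exact hk ((Finset.sum_eq_zero_iff_of_nonneg (fun i _ => h i)).mp h2 k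
        (Finset.mem_univ k))
    have hij : i ≠ j := fun h => absurd (h ▸ hi) (not_lt.mpr hj.le)
    have hle : |x i| + |x j| ≤ 2 := by
      have hsub : ∑ k ∈ ({i, j} : Finset (Fin n)), |x k| ≤ ∑ k, |x k| :=
        Finset.sum_le_sum_of_subset_of_nonneg (Finset.subset_univ _)
          (fun k _ _ => abs_nonneg (x k))
      rw [Finset.sum_pair hij] at hsub
      omega
    have hxi : x i = 1 := by
      have := abs_pos.mpr hj.ne
      have := abs_pos.mpr hi.ne'
      rcases abs_cases (x i) with ⟨h, _⟩ | ⟨_, h⟩ <;> omega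
    have hxj : x j = -1 := by
      have := abs_pos.mpr hj.ne
      have := abs_pos.mpr hi.ne'
      rcases abs_cases (x j) with ⟨_, h⟩ | ⟨h, _⟩ <;> omega
    have hrest : ∀ k, k ≠ i → k ≠ j → x k = 0 := by
      intro m hmi hmj
      have hdisj : ∑ k ∈ Finset.univ \ ({i, j} : Finset (Fin n)), |x k| = 0 := by
        have htot := Finset.sum_sdiff (f := fun k => |x k|)
          (Finset.subset_univ ({i, j} : Finset (Fin n)))
        beta_reduce at htot
        rw [Finset.sum_pair hij, hxi, hxj, hS, show |(1:ℤ)| = 1 by norm_num,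
          show |(-1:ℤ)| = 1 by norm_num] at htot
        omega
      have hm : |x m| = 0 := by
        refine (Finset.sum_eq_zero_iff_of_nonneg (fun k _ => abs_nonneg (x k))).mp
          hdisj m ?_
        simp [hmi, hmj]
      exact abs_eq_zero.mp hm
    have hsum : ∑ k, (a k : ℤ) * x k = (a i : ℤ) - a j := by
      rw [← Finset.sum_subset (Finset.subset_univ ({i, j} : Finset (Fin n)))
        (fun m _ hm => by
          have h1 : m ≠ i := fun h => hm (by simp [h])
          have h2 : m ≠ j := fun h => hm (by simp [h])
          simp [hrest m h1 h2])]
      rw [Finset.sum_pair hij, hxi, hxj]; ring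
    rw [hsum] at h1
    have : a i = a j := by omega
    exact hij (ha this)
  obtain ⟨r, hr⟩ := heven
  omega

theorem not_pDependent_of_injective (α p : ℝ) (hα0 : 0 < α) (hα1 : α < 1) (hp : 1 ≤ p)
    (n : ℕ) (a : Fin n → ℕ) (ha : Function.Injective a)
    (hn : (n : ℝ) < 4 * α ^ (-p)) :
    ¬ pDependent α p a := by
  rintro ⟨x, hx, h1, h2, hle⟩
  have hp0 : (0 : ℝ) < p := lt_of_lt_of_le one_pos hp
  have h4 : (4 : ℝ) ≤ ∑ i, (|x i| : ℝ) ^ p := by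
    have hterm : ∀ i : Fin n, |(x i : ℝ)| ≤ |(x i : ℝ)| ^ p := by
      intro i
      rcases eq_or_ne (x i) 0 with h | h
      · simp [h, Real.zero_rpow hp0.ne']
      · have h1' : (1 : ℝ) ≤ |(x i : ℝ)| := by
          rw [← Int.cast_abs]; exact_mod_cast Int.one_le_abs h
        calc |(x i : ℝ)| = |(x i : ℝ)| ^ (1 : ℝ) := (Real.rpow_one _).symm
          _ ≤ |(x i : ℝ)| ^ p := Real.rpow_le_rpow_of_exponent_le h1' hp
    calc (4 : ℝ) ≤ ((∑ i, |x i| : ℤ) : ℝ) := by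
          exact_mod_cast four_le_abs_sum a ha x hx h1 h2
      _ = ∑ i, |(x i : ℝ)| := by push_cast; rfl
      _ ≤ ∑ i, |(x i : ℝ)| ^ p := Finset.sum_le_sum (fun i _ => hterm i)
  have hSnn : (0 : ℝ) ≤ ∑ i, (|x i| : ℝ) ^ p := le_trans (by norm_num) h4
  have hαn : (0 : ℝ) ≤ α * (n : ℝ) ^ (1/p) :=
    mul_nonneg hα0.le (Real.rpow_nonneg (Nat.cast_nonneg n) _)
  have hLHS : ((∑ i, (|x i| : ℝ) ^ p) ^ (1/p)) ^ p = ∑ i, (|x i| : ℝ) ^ p := by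
    rw [← Real.rpow_mul hSnn, one_div_mul_cancel hp0.ne', Real.rpow_one]
  have hRHS : (α * (n : ℝ) ^ (1/p)) ^ p = α ^ p * (n : ℝ) := by
    rw [Real.mul_rpow hα0.le (Real.rpow_nonneg (Nat.cast_nonneg n) _),
      ← Real.rpow_mul (Nat.cast_nonneg n), one_div_mul_cancel hp0.ne', Real.rpow_one]
  have hkey : (4 : ℝ) ≤ α ^ p * n := by
    calc (4 : ℝ) ≤ ∑ i, (|x i| : ℝ) ^ p := h4
      _ = ((∑ i, (|x i| : ℝ) ^ p) ^ (1/p)) ^ p := hLHS.symm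
      _ ≤ (α * (n : ℝ) ^ (1/p)) ^ p := Real.rpow_le_rpow (Real.rpow_nonneg hSnn _) hle hp0.le
      _ = α ^ p * n := hRHS
  have hαp : (0 : ℝ) < α ^ p := Real.rpow_pos_of_pos hα0 p
  have hneg : α ^ (-p) = (α ^ p)⁻¹ := Real.rpow_neg hα0.le p
  rw [hneg] at hn
  have : α ^ p * (n : ℝ) < α ^ p * (4 * (α ^ p)⁻¹) := by
    exact mul_lt_mul_of_pos_left hn hαp
  rw [← mul_assoc, mul_comm (α ^ p) 4, mul_assoc, mul_inv_cancel₀ hαp.ne', mul_one] at this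
  linarith
end

section
/- Let m ∈ ℕ and c = (m+1/2)/(m+1). Given a 1/2-full subset-sum instance with n weights a₁,…,aₙ (n even) and target s, choose integers b₁,…,b_{mn} each greater than ∑ᵢ aᵢ, set β := ∑ⱼ bⱼ and s' := s + β. Then the c-full instance on the mn+n weights a₁,…,aₙ,b₁,…,b_{mn} with target s' has a solution (selecting exactly c(mn+n) = mn + n/2 weights) if and only if the original 1/2-full instance has a solution (selecting exactly n/2 of the aᵢ). -/
theorem cFull_reduction_large (m k : ℕ) (a : Fin (2 * k) → ℕ)
    (b : Fin (m * (2 * k)) → ℕ) (s : ℕ)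
    (hb : ∀ j, (∑ i, a i) < b j) :
    (∃ T : Finset (Fin (2 * k + m * (2 * k))),
        ∑ i ∈ T, Fin.append a b i = s + ∑ j, b j ∧ T.card = m * (2 * k) + k) ↔
    (∃ S : Finset (Fin (2 * k)), ∑ i ∈ S, a i = s ∧ S.card = k) := by
  set e := finSumFinEquiv (m := 2 * k) (n := m * (2 * k))
  have key : ∀ A : Finset (Fin (2 * k)), ∀ B : Finset (Fin (m * (2 * k))),
      ∑ i ∈ (A.disjSum B).map e.toEmbedding, Fin.append a b i
        = ∑ i ∈ A, a i + ∑ j ∈ B, b j := by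
    intro A B
    rw [Finset.sum_map, Finset.sum_disjSum]
    congr 1
    · exact Finset.sum_congr rfl fun i _ => by
        simp [e, finSumFinEquiv_apply_left, Fin.append_left]
    · exact Finset.sum_congr rfl fun j _ => by
        simp [e, finSumFinEquiv_apply_right, Fin.append_right]
  constructor
  · rintro ⟨T, hsum, hcard⟩
    set U := T.map e.symm.toEmbedding with hU
    have hT : T = (U.toLeft.disjSum U.toRight).map e.toEmbedding := by
      rw [Finset.toLeft_disjSum_toRight, hU, Finset.map_map]
      ext x; simp
    rw [hT, key] at hsum
    have hcard' : U.toLeft.card + U.toRight.card = m * (2 * k) + k := by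
      rw [Finset.card_toLeft_add_card_toRight, hU, Finset.card_map, hcard]
    -- show U.toRight = univ
    have hright : U.toRight = Finset.univ := by
      by_contra h
      obtain ⟨j, hj⟩ : ∃ j, j ∉ U.toRight := by
        by_contra h'; push_neg at h'; exact h (Finset.eq_univ_iff_forall.2 h')
      have h1 : ∑ j' ∈ U.toRight, b j' + b j ≤ ∑ j', b j' := by
        have := Finset.sum_le_sum_of_subset (f := b)
          (Finset.subset_univ (insert j U.toRight))
        rwa [Finset.sum_insert hj, add_comm] at this
      have h2 : ∑ i ∈ U.toLeft, a i < b j :=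
        lt_of_le_of_lt (Finset.sum_le_sum_of_subset (Finset.subset_univ _)) (hb j)
      omega
    rw [hright] at hsum hcard'
    have hβ : ∑ j ∈ (Finset.univ : Finset (Fin (m * (2 * k)))), b j = ∑ j, b j := rfl
    rw [Finset.card_univ, Fintype.card_fin] at hcard'
    exact ⟨U.toLeft, by omega, by omega⟩
  · rintro ⟨S, hsum, hcard⟩
    refine ⟨(S.disjSum Finset.univ).map e.toEmbedding, ?_, ?_⟩
    · rw [key, hsum]
    · rw [Finset.card_map, Finset.card_disjSum, hcard, Finset.card_univ,
        Fintype.card_fin, add_comm]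
end

section
/- Let 0 < ε ≤ 1, m ∈ ℕ with c := (m+1/2)/(m+1) > 1 − ε/4 and α := 1 − ε/2. Let a₁,…,aₙ be nonnegative integers not p-dependent with respect to α, s ∈ ℕ, r := cn ∈ ℕ, N := ⌊α n^(1/p)⌋ + 1, and let 𝓛_r ⊆ ℝ^(n+2) be the lattice spanned by b_i = e_i + N·e_{n+1} + N a_i·e_{n+2} for 1 ≤ i ≤ n and b_{n+1} = (1/2,…,1/2, Nr, Ns). Assume ε = 1, or n < (3^p−1)/((2−ε)^p−1) when ε < 1. If x ∈ {0,1}ⁿ solves the c-full subset-sum instance (∑ᵢ aᵢxᵢ = s with exactly r ones), then v := (x₁−1/2,…,xₙ−1/2, 0, 0) ∈ 𝓛_r is a shortest nonzero vector of 𝓛_r in the ℓ_p-norm, and λ_{1,p}(𝓛_r) = n^(1/p)/2. -/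
/-- The vector ∑ᵢ yᵢ bᵢ + z·b_{n+1} in the lattice 𝓛_r ⊆ ℝ^(n+2), where
bᵢ = eᵢ + N e_{n+1} + N aᵢ e_{n+2} and b_{n+1} = (1/2,…,1/2, Nr, Ns). -/
noncomputable def latVec (n : ℕ) (a : Fin n → ℕ) (N r s : ℕ)
    (y : Fin n → ℤ) (z : ℤ) : Fin (n + 2) → ℝ :=
  fun j =>
    if h : (j : ℕ) < n then ((y ⟨j, h⟩ : ℝ) + (z : ℝ) * (1/2))
    else if (j : ℕ) = n then (N : ℝ) * (((∑ i, y i : ℤ) : ℝ) + (z : ℝ) * r)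
    else (N : ℝ) * (((∑ i, (a i : ℤ) * y i : ℤ) : ℝ) + (z : ℝ) * s)

noncomputable def pnorm (p : ℝ) {k : ℕ} (v : Fin k → ℝ) : ℝ :=
  (∑ j, |v j| ^ p) ^ (1/p)

lemma sum_fin_two (n : ℕ) (f : Fin (n+2) → ℝ) :
    ∑ j, f j = (∑ i : Fin n, f ⟨i.1, by omega⟩) + f ⟨n, by omega⟩ + f ⟨n+1, by omega⟩ := by
  rw [Fin.sum_univ_castSucc, Fin.sum_univ_castSucc]; rfl

lemma latVec_lt (n : ℕ) (a : Fin n → ℕ) (N r s : ℕ) (y : Fin n → ℤ) (z : ℤ) (i : Fin n) :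
    latVec n a N r s y z ⟨i.1, by omega⟩ = (y i : ℝ) + (z:ℝ) * (1/2) := by
  simp [latVec, i.isLt]

lemma latVec_n (n : ℕ) (a : Fin n → ℕ) (N r s : ℕ) (y : Fin n → ℤ) (z : ℤ) :
    latVec n a N r s y z ⟨n, by omega⟩ = (N:ℝ) * (((∑ i, y i : ℤ):ℝ) + (z:ℝ) * r) := by
  simp [latVec]

lemma latVec_n1 (n : ℕ) (a : Fin n → ℕ) (N r s : ℕ) (y : Fin n → ℤ) (z : ℤ) :
    latVec n a N r s y z ⟨n+1, by omega⟩ = (N:ℝ) * (((∑ i, (a i:ℤ) * y i : ℤ):ℝ) + (z:ℝ) * s) := by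
  simp [latVec]

lemma half_int_bound (q : ℤ) : (1/2 : ℝ) ≤ |(q:ℝ) + 1/2| := by
  rcases le_or_gt 0 q with h|h
  · have h' : (0:ℝ) ≤ q := by exact_mod_cast h
    rw [abs_of_nonneg (by linarith)]; linarith
  · have h' : (q:ℝ) ≤ -1 := by exact_mod_cast (by omega : q ≤ -1)
    rw [abs_of_nonpos (by linarith)]; linarith

set_option maxHeartbeats 1000000 in
theorem solution_gives_shortest_vector (ε p : ℝ) (hε0 : 0 < ε) (hε1 : ε ≤ 1)
    (hp : 1 ≤ p) (m n r s N : ℕ) (hn : 0 < n)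
    (hc : ((m : ℝ) + 1/2) / ((m : ℝ) + 1) > 1 - ε/4)
    (a : Fin n → ℕ)
    (hdep : ¬ pDependent (1 - ε/2) p a)
    (hr : (r : ℝ) = ((m : ℝ) + 1/2) / ((m : ℝ) + 1) * n)
    (hN : N = Nat.floor ((1 - ε/2) * (n : ℝ) ^ (1/p)) + 1)
    (hcond : ε = 1 ∨ (n : ℝ) < ((3:ℝ) ^ p - 1) / ((2 - ε) ^ p - 1))
    (x : Fin n → ℕ) (hx01 : ∀ i, x i ≤ 1)
    (hsum : ∑ i, a i * x i = s) (hcard : ∑ i, x i = r) :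
    latVec n a N r s (fun i => (x i : ℤ)) (-1) ≠ 0 ∧
    pnorm p (latVec n a N r s (fun i => (x i : ℤ)) (-1)) = (n : ℝ) ^ (1/p) / 2 ∧
    ∀ (y : Fin n → ℤ) (z : ℤ), latVec n a N r s y z ≠ 0 →
      (n : ℝ) ^ (1/p) / 2 ≤ pnorm p (latVec n a N r s y z) := by
  have hp0 : 0 < p := lt_of_lt_of_le one_pos hp
  have hpne : p ≠ 0 := ne_of_gt hp0
  have hip : 0 < 1/p := by positivity
  have hnR : (0:ℝ) < n := by exact_mod_cast hn
  have hnp : (0:ℝ) ≤ (n:ℝ)^(1/p) := Real.rpow_nonneg hnR.le _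
  have hT : ((n:ℝ) * (1/2:ℝ)^p)^(1/p) = (n:ℝ)^(1/p)/2 := by
    rw [Real.mul_rpow hnR.le (Real.rpow_nonneg (by norm_num) _),
        ← Real.rpow_mul (by norm_num : (0:ℝ) ≤ 1/2), mul_one_div, div_self hpne,
        Real.rpow_one]
    ring
  have hNgt : (1 - ε/2) * (n:ℝ)^(1/p) < N := by
    rw [hN]; push_cast; exact Nat.lt_floor_add_one _
  have hNpos : (0:ℝ) < N := by
    have h0 : (0:ℝ) ≤ (1 - ε/2) * (n:ℝ)^(1/p) := mul_nonneg (by linarith) hnp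
    linarith
  have hhalf : (n:ℝ)^(1/p)/2 ≤ (1 - ε/2) * (n:ℝ)^(1/p) := by
    have := mul_le_mul_of_nonneg_right (by linarith : (1/2:ℝ) ≤ 1 - ε/2) hnp
    linarith
  refine ⟨?_, ?_, ?_⟩
  · -- v ≠ 0
    intro h0
    have h1 : latVec n a N r s (fun i => (x i:ℤ)) (-1)
        ⟨((⟨0, hn⟩ : Fin n) : ℕ), by omega⟩ = 0 := by rw [h0]; rfl
    rw [latVec_lt] at h1
    rcases Nat.le_one_iff_eq_zero_or_eq_one.mp (hx01 ⟨0, hn⟩) with h|h <;>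
      rw [h] at h1 <;> norm_num at h1
  · -- pnorm of v
    unfold pnorm
    rw [sum_fin_two]
    have e1 : ∀ i : Fin n,
        |latVec n a N r s (fun i => (x i:ℤ)) (-1) ⟨i.1, by omega⟩| ^ p = (1/2:ℝ)^p := by
      intro i
      rw [latVec_lt]
      rcases Nat.le_one_iff_eq_zero_or_eq_one.mp (hx01 i) with h|h <;> rw [h] <;>
        norm_num [abs_of_pos]
    have e2 : latVec n a N r s (fun i => (x i:ℤ)) (-1) ⟨n, by omega⟩ = 0 := by
      rw [latVec_n]
      have : (∑ i, ((x i:ℤ)) : ℤ) = (r:ℤ) := by rw [← hcard]; push_cast; rfl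
      rw [this]; push_cast; ring
    have e3 : latVec n a N r s (fun i => (x i:ℤ)) (-1) ⟨n+1, by omega⟩ = 0 := by
      rw [latVec_n1]
      have : (∑ i, (a i:ℤ) * (x i:ℤ) : ℤ) = (s:ℤ) := by rw [← hsum]; push_cast; rfl
      rw [this]; push_cast; ring
    rw [e2, e3, Finset.sum_congr rfl (fun i _ => e1 i), Finset.sum_const,
        Finset.card_univ, Fintype.card_fin, abs_zero, Real.zero_rpow hpne,
        nsmul_eq_mul, add_zero, add_zero, hT]
  · -- lower bound
    intro y z hne
    by_contra hcon
    push_neg at hcon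
    set w := latVec n a N r s y z with hw
    set S := ∑ j, |w j| ^ p with hSdef
    have hterm_nn : ∀ j ∈ Finset.univ, (0:ℝ) ≤ |w j| ^ p :=
      fun j _ => Real.rpow_nonneg (abs_nonneg _) _
    have hS0 : 0 ≤ S := Finset.sum_nonneg hterm_nn
    have hpn : pnorm p w = S ^ (1/p) := rfl
    rw [hpn] at hcon
    have hSlt : S < (n:ℝ) * (1/2:ℝ)^p := by
      by_contra hS
      push_neg at hS
      have := Real.rpow_le_rpow (by positivity) hS hip.le
      rw [hT] at this
      linarith
    have hcoord : ∀ j, |w j| < (N:ℝ) := by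
      intro j
      have h1 : |w j| ^ p ≤ S := Finset.single_le_sum hterm_nn (Finset.mem_univ j)
      have h2 : (|w j| ^ p) ^ (1/p) ≤ S ^ (1/p) := Real.rpow_le_rpow (by positivity) h1 hip.le
      rw [← Real.rpow_mul (abs_nonneg _), mul_one_div, div_self hpne, Real.rpow_one] at h2
      linarith
    have hzero : ∀ K : ℤ, |(N:ℝ) * (K:ℝ)| < N → K = 0 := by
      intro K hK
      rw [abs_mul, abs_of_pos hNpos] at hK
      have h1 : |(K:ℝ)| < 1 := by nlinarith [abs_nonneg (K:ℝ)]
      have h2 : |K| < 1 := by exact_mod_cast (by rwa [← Int.cast_abs] at h1 : ((|K|:ℤ):ℝ) < 1)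
      rcases abs_lt.mp h2 with ⟨h3, h4⟩
      omega
    have hz1 : (∑ i, y i) + z * (r:ℤ) = 0 := by
      apply hzero
      have e : (((∑ i, y i) + z * (r:ℤ) : ℤ) : ℝ) = ((∑ i, y i : ℤ):ℝ) + (z:ℝ) * r := by
        push_cast; ring
      rw [e, ← latVec_n n a N r s y z]
      exact hcoord _
    have hz2 : (∑ i, (a i:ℤ) * y i) + z * (s:ℤ) = 0 := by
      apply hzero
      have e : (((∑ i, (a i:ℤ) * y i) + z * (s:ℤ) : ℤ) : ℝ)
          = ((∑ i, (a i:ℤ) * y i : ℤ):ℝ) + (z:ℝ) * s := by push_cast; ring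
      rw [e, ← latVec_n1 n a N r s y z]
      exact hcoord _
    have hSsplit : (∑ i : Fin n, |w ⟨i.1, by omega⟩| ^ p) ≤ S := by
      rw [hSdef, sum_fin_two]
      have b1 : (0:ℝ) ≤ |w ⟨n, by omega⟩| ^ p := Real.rpow_nonneg (abs_nonneg _) _
      have b2 : (0:ℝ) ≤ |w ⟨n+1, by omega⟩| ^ p := Real.rpow_nonneg (abs_nonneg _) _
      linarith
    rcases Int.even_or_odd z with ⟨t, ht⟩ | ⟨t, ht⟩
    · -- z even
      rcases eq_or_ne t 0 with ht0 | ht0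
      · -- z = 0
        have hz0 : z = 0 := by omega
        subst hz0
        simp only [zero_mul, add_zero] at hz1 hz2
        by_cases hy : y = 0
        · apply hne
          funext j
          subst hy
          show latVec n a N r s 0 0 j = 0
          simp [latVec]
        · apply hdep
          refine ⟨y, hy, hz2, hz1, ?_⟩
          have e : ∀ i : Fin n, (|y i| : ℝ) ^ p = |w ⟨i.1, by omega⟩| ^ p := by
            intro i
            rw [hw, latVec_lt]
            push_cast
            norm_num
          rw [Finset.sum_congr rfl (fun i _ => e i)]
          have h1 : (∑ i : Fin n, |w ⟨i.1, by omega⟩| ^ p) ^ (1/p)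
              ≤ ((n:ℝ) * (1/2:ℝ)^p) ^ (1/p) := by
            apply Real.rpow_le_rpow (Finset.sum_nonneg fun i _ => Real.rpow_nonneg (abs_nonneg _) _) _ hip.le
            linarith
          rw [hT] at h1
          linarith
      · -- |z| ≥ 2, z = 2t, t ≠ 0
        have hz2t : z = 2 * t := by omega
        have husum : ∑ i, (y i + t) = t * ((n:ℤ) - 2*r) := by
          rw [Finset.sum_add_distrib, Finset.sum_const, Finset.card_univ, Fintype.card_fin,
              nsmul_eq_mul]
          have hsy : ∑ i, y i = -(z * (r:ℤ)) := by linarith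
          rw [hsy, hz2t]; ring
        have hc34 : ((m:ℝ)+1/2)/((m:ℝ)+1) > 3/4 := by linarith
        have hrhalf : (n:ℝ)/2 < 2*(r:ℝ) - n := by
          rw [hr]; nlinarith
        have habs : (n:ℝ)/2 < |((∑ i, (y i + t) : ℤ):ℝ)| := by
          rw [husum]
          push_cast
          rw [abs_mul]
          have h1 : (1:ℝ) ≤ |(t:ℝ)| := by
            have : (1:ℤ) ≤ |t| := Int.one_le_abs ht0
            calc (1:ℝ) ≤ ((|t|:ℤ):ℝ) := by exact_mod_cast this
            _ = |(t:ℝ)| := by push_cast; rfl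
          have h2 : |(n:ℝ) - 2*r| = 2*(r:ℝ) - n := by
            rw [abs_of_nonpos (by linarith)]; ring
          calc (n:ℝ)/2 < 2*(r:ℝ) - n := hrhalf
          _ = 1 * |(n:ℝ) - 2*r| := by rw [h2]; ring
          _ ≤ |(t:ℝ)| * |(n:ℝ) - 2*r| := by
              apply mul_le_mul_of_nonneg_right h1 (abs_nonneg _)
        have hterm : ∀ i : Fin n, |((y i + t : ℤ):ℝ)| ≤ |w ⟨i.1, by omega⟩| ^ p := by
          intro i
          have ew : w ⟨i.1, by omega⟩ = ((y i + t : ℤ):ℝ) := by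
            rw [hw, latVec_lt, hz2t]; push_cast; ring
          rw [ew]
          rcases eq_or_ne (y i + t) 0 with h|h
          · rw [h]; simp [Real.zero_rpow hpne]
          · have h1 : (1:ℝ) ≤ |((y i + t : ℤ):ℝ)| := by
              have : (1:ℤ) ≤ |y i + t| := Int.one_le_abs h
              calc (1:ℝ) ≤ ((|y i + t|:ℤ):ℝ) := by exact_mod_cast this
              _ = |((y i + t : ℤ):ℝ)| := by push_cast; rfl
            calc |((y i + t : ℤ):ℝ)| = |((y i + t : ℤ):ℝ)| ^ (1:ℝ) := (Real.rpow_one _).symm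
            _ ≤ |((y i + t : ℤ):ℝ)| ^ p := Real.rpow_le_rpow_of_exponent_le h1 hp
        have hsum2 : (n:ℝ)/2 < ∑ i : Fin n, |w ⟨i.1, by omega⟩| ^ p := by
          calc (n:ℝ)/2 < |((∑ i, (y i + t) : ℤ):ℝ)| := habs
          _ ≤ ∑ i : Fin n, |((y i + t : ℤ):ℝ)| := by
              push_cast
              exact Finset.abs_sum_le_sum_abs _ _
          _ ≤ ∑ i : Fin n, |w ⟨i.1, by omega⟩| ^ p := Finset.sum_le_sum fun i _ => hterm i
        have hhp : (1/2:ℝ)^p ≤ 1/2 := by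
          have := Real.rpow_le_rpow_of_exponent_ge (by norm_num : (0:ℝ) < 1/2)
            (by norm_num : (1/2:ℝ) ≤ 1) hp
          rwa [Real.rpow_one] at this
        have hfin : (n:ℝ) * (1/2:ℝ)^p ≤ (n:ℝ) * (1/2) :=
          mul_le_mul_of_nonneg_left hhp hnR.le
        linarith
    · -- z odd: z = 2t+1
      have hbd : ∀ i : Fin n, (1/2:ℝ)^p ≤ |w ⟨i.1, by omega⟩| ^ p := by
        intro i
        apply Real.rpow_le_rpow (by norm_num) _ hp0.le
        have ew : w ⟨i.1, by omega⟩ = ((y i + t : ℤ):ℝ) + 1/2 := by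
          rw [hw, latVec_lt, ht]; push_cast; ring
        rw [ew]
        exact half_int_bound _
      have hsum2 : (n:ℝ) * (1/2:ℝ)^p ≤ ∑ i : Fin n, |w ⟨i.1, by omega⟩| ^ p := by
        calc (n:ℝ) * (1/2:ℝ)^p = ∑ _i : Fin n, (1/2:ℝ)^p := by
              rw [Finset.sum_const, Finset.card_univ, Fintype.card_fin, nsmul_eq_mul]
        _ ≤ _ := Finset.sum_le_sum fun i _ => hbd i
      linarith
end

section
/- Any nonzero vector x̂ = ∑ᵢ yᵢ bᵢ + y·b_{n+1} in the lattice 𝓛_r with ‖x̂‖_p ≤ α·n^(1/p) has its last two coordinates equal to zero, i.e., y·r + ∑ᵢ yᵢ = 0 and ∑ᵢ aᵢyᵢ + y·s = 0. -/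
theorem last_two_coordinates_vanish (α p : ℝ) (hα0 : 0 < α) (hα1 : α < 1)
    (hp : 1 ≤ p) (n r s N : ℕ) (a : Fin n → ℕ)
    (hN : N = Nat.floor (α * (n : ℝ) ^ (1/p)) + 1)
    (y : Fin n → ℤ) (z : ℤ)
    (hne : latVec n a N r s y z ≠ 0)
    (hnorm : pnorm p (latVec n a N r s y z) ≤ α * (n : ℝ) ^ (1/p)) :
    z * r + (∑ i, y i) = 0 ∧ (∑ i, (a i : ℤ) * y i) + z * s = 0 := by
  have hp0 : 0 < p := lt_of_lt_of_le one_pos hp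
  set v := latVec n a N r s y z with hv
  have hNpos : 0 < (N : ℝ) := by rw [hN]; positivity
  have hlt : α * (n : ℝ) ^ (1/p) < (N : ℝ) := by
    rw [hN]; push_cast; exact Nat.lt_floor_add_one _
  have hcoord : ∀ j, |v j| ≤ α * (n : ℝ) ^ (1/p) := by
    intro j
    have h1 : |v j| = (|v j| ^ p) ^ (1/p) := by
      rw [← Real.rpow_mul (abs_nonneg _), mul_one_div_cancel (ne_of_gt hp0),
        Real.rpow_one]
    rw [h1]
    refine le_trans ?_ hnorm
    unfold pnorm
    apply Real.rpow_le_rpow (by positivity)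
    · exact Finset.single_le_sum (f := fun j => |v j| ^ p)
        (fun i _ => by positivity) (Finset.mem_univ j)
    · positivity
  have key : ∀ m : ℤ, |(N : ℝ) * (m : ℝ)| ≤ α * (n : ℝ) ^ (1/p) → m = 0 := by
    intro m hm
    have h2 : (N : ℝ) * |(m : ℝ)| < (N : ℝ) * 1 := by
      rw [abs_mul, abs_of_pos hNpos] at hm
      rw [mul_one]; exact lt_of_le_of_lt hm hlt
    have h3 : |(m : ℝ)| < 1 := lt_of_mul_lt_mul_left h2 hNpos.le
    have h4 : ((|m| : ℤ) : ℝ) < 1 := by rwa [Int.cast_abs]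
    have h5 : |m| < 1 := by exact_mod_cast h4
    rcases abs_lt.mp h5 with ⟨h6, h7⟩
    omega
  constructor
  · have hj := hcoord ⟨n, by omega⟩
    have hev : v ⟨n, by omega⟩ = (N : ℝ) * ((z * r + (∑ i, y i) : ℤ) : ℝ) := by
      simp only [hv, latVec]
      rw [dif_neg (by simp), if_pos (by simp)]
      push_cast; ring
    rw [hev] at hj
    exact key _ hj
  · have hj := hcoord ⟨n + 1, by omega⟩
    have hev : v ⟨n + 1, by omega⟩ =
        (N : ℝ) * (((∑ i, (a i : ℤ) * y i) + z * s : ℤ) : ℝ) := by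
      simp only [hv, latVec]
      rw [dif_neg (by omega), if_neg (by omega)]
      push_cast; ring
    rw [hev] at hj
    exact key _ hj
end
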